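/- Let n > 2k ≥ 2 be integers. Let h and v be smooth functions on the half-space {(t,x) : t > 0} ⊂ ℝ × ℝ^{n+1} satisfying Xh = (−(n−2k)/3 − 2)·h and Xv = (−(n−2k)/3)·v pointwise. Then the function Σ_{a+b+c=k} A_{a,b,c}·Δ̃^a((Δ̃^b(Q·h))·(Δ̃^c v)) vanishes at every point of {t > 0} at which |x| = t (that is, on the null cone {Q = 0} ∩ {t > 0}). -/

import Mathlib

/-- The flat Fefferman–Graham ambient space `ℝ × ℝ^{n+1}` of the standard conformal
`n`-sphere, with coordinates `(t, x⁰, …, xⁿ)`. -/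
abbrev Amb (n : ℕ) : Type := ℝ × (Fin (n+1) → ℝ)

/-- The partial derivative `∂_t`. -/
noncomputable def ptD {n : ℕ} (f : Amb n → ℝ) (p : Amb n) : ℝ :=
  fderiv ℝ f p (1, 0)

/-- The partial derivative `∂_{xⁱ}`. -/
noncomputable def pxD {n : ℕ} (i : Fin (n+1)) (f : Amb n → ℝ) (p : Amb n) : ℝ :=
  fderiv ℝ f p (0, Pi.single i 1)

/-- The flat ambient Laplacian `Δ̃f = ∂_t²f − Σᵢ ∂_{xⁱ}²f` (convention `Δ ≥ 0` for the
metric `g̃ = −dt² + Σᵢ (dxⁱ)²`). -/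
noncomputable def LapA {n : ℕ} (f : Amb n → ℝ) : Amb n → ℝ :=
  fun p => ptD (fun q => ptD f q) p - ∑ i, pxD i (fun q => pxD i f q) p

/-- The Euler (dilation) operator `Xf = t∂_t f + Σᵢ xⁱ∂_{xⁱ} f`. -/
noncomputable def EulerA {n : ℕ} (f : Amb n → ℝ) (p : Amb n) : ℝ :=
  p.1 * ptD f p + ∑ i, p.2 i * pxD i f p

/-- The function `Q(t,x) = |x|² − t²`. -/
def QA {n : ℕ} (p : Amb n) : ℝ := (∑ i, (p.2 i)^2) - p.1^2

/-- The half-space `{(t,x) : t > 0}`. -/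
def HS (n : ℕ) : Set (Amb n) := {p | 0 < p.1}

/-- The Ovsienko–Redou coefficient
`A_{a,b,c} = (k!/(a!b!c!))·Γ(α+a+b)·Γ(α+a+c)·Γ(α+b+c)/(Γ(α)·Γ(α+k)²)`, `α = (n−2k)/6`. -/
noncomputable def ORA (n k a b c : ℕ) : ℝ :=
  ((k.factorial : ℝ) / ((a.factorial : ℝ) * (b.factorial : ℝ) * (c.factorial : ℝ)))
  * Real.Gamma (((n:ℝ) - 2*k)/6 + a + b)
  * Real.Gamma (((n:ℝ) - 2*k)/6 + a + c)
  * Real.Gamma (((n:ℝ) - 2*k)/6 + b + c)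
  / (Real.Gamma (((n:ℝ) - 2*k)/6) * Real.Gamma (((n:ℝ) - 2*k)/6 + k)^2)

/-- The Ovsienko–Redou ambient operator `D̃_{2k}(u ⊗ v) = Σ_{a+b+c=k} A_{a,b,c}·Δ̃^a((Δ̃^b u)(Δ̃^c v))`. -/
noncomputable def ORop {n : ℕ} (k : ℕ) (u v : Amb n → ℝ) : Amb n → ℝ :=
  fun p => ∑ abc ∈ Finset.HasAntidiagonal.antidiagonal k, ∑ bc ∈ Finset.HasAntidiagonal.antidiagonal abc.2,
    ORA n k abc.1 bc.1 bc.2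
      * LapA^[abc.1] (fun q => LapA^[bc.1] u q * LapA^[bc.2] v q) p

/-!
The Laplacian of `Q·f` is governed by the Euler field: `Δ̃(Q f) = Q Δ̃f − 4 X f − 2(n+2) f`,
and `Δ̃` lowers homogeneity weights by `2` because `[∂_u, X] = ∂_u` for every constant direction `u`.
Iterating, `Δ̃^m(Q f) = Q Δ̃^m f + c_m(w) Δ̃^{m-1} f` for `f` of weight `w`. Using this twice in the
term `(a, b, c)` of `D̃_{2k}(Q h ⊗ v)` and evaluating on `Q = 0`, that term becomes
`4a(α+b+c) A_{a,b,c} T_{a-1,b,c} − 4b(α+a+c) A_{a,b,c} T_{a,b-1,c}` with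
`T_{a,b,c} = Δ̃^a((Δ̃^b h)(Δ̃^c v))`. The recursion `Γ(x+1) = x Γ(x)` gives
`(a+1)(α+b+c) A_{a+1,b,c} = (b+1)(α+a+c) A_{a,b+1,c}`, so after shifting `a` in the first sum and
`b` in the second, the two sums cancel.
-/

open scoped ContDiff

section DirDeriv

variable {E : Type*} [NormedAddCommGroup E] [NormedSpace ℝ E] {U : Set E} {f g : E → ℝ}
  {q : E}

noncomputable def dirDeriv (u : E) (f : E → ℝ) (q : E) : ℝ := fderiv ℝ f q u

def IsEulerHomogeneousOn (U : Set E) (w : ℝ) (f : E → ℝ) : Prop :=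
  ∀ q ∈ U, fderiv ℝ f q q = w * f q

theorem ContDiffOn.dirDeriv (hf : ContDiffOn ℝ ∞ f U) (hU : IsOpen U) (u : E) :
    ContDiffOn ℝ ∞ (dirDeriv u f) U :=
  (hf.fderiv_of_isOpen hU le_rfl).clm_apply contDiffOn_const

theorem dirDeriv_congr (hU : IsOpen U) (hfg : Set.EqOn f g U) (u : E) :
    Set.EqOn (dirDeriv u f) (dirDeriv u g) U := fun _ hq => by
  simp only [dirDeriv, (hfg.eventuallyEq_of_mem (hU.mem_nhds hq)).fderiv_eq]

theorem dirDeriv_add (hf : DifferentiableAt ℝ f q) (hg : DifferentiableAt ℝ g q) (u : E) :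
    dirDeriv u (fun x => f x + g x) q = dirDeriv u f q + dirDeriv u g q := by
  simp [dirDeriv, fderiv_fun_add hf hg]

theorem dirDeriv_const_mul (hf : DifferentiableAt ℝ f q) (c : ℝ) (u : E) :
    dirDeriv u (fun x => c * f x) q = c * dirDeriv u f q := by
  simp [dirDeriv, fderiv_const_mul hf]

theorem dirDeriv_mul (hf : DifferentiableAt ℝ f q) (hg : DifferentiableAt ℝ g q) (u : E) :
    dirDeriv u (fun x => f x * g x) q = f q * dirDeriv u g q + g q * dirDeriv u f q := by
  simp [dirDeriv, fderiv_fun_mul hf hg]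

theorem dirDeriv_dirDeriv_mul (hU : IsOpen U) (hf : ContDiffOn ℝ ∞ f U)
    (hg : ContDiffOn ℝ ∞ g U) (hq : q ∈ U) (u : E) :
    dirDeriv u (dirDeriv u (fun x => f x * g x)) q
      = f q * dirDeriv u (dirDeriv u g) q + 2 * dirDeriv u f q * dirDeriv u g q
        + g q * dirDeriv u (dirDeriv u f) q := by
  have hd {F : E → ℝ} (hF : ContDiffOn ℝ ∞ F U) {r : E} (hr : r ∈ U) :
      DifferentiableAt ℝ F r := (hF.differentiableOn (by simp)).differentiableAt (hU.mem_nhds hr)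
  have hfg : Set.EqOn (dirDeriv u (fun x => f x * g x))
      (fun x => f x * dirDeriv u g x + g x * dirDeriv u f x) U :=
    fun r hr => dirDeriv_mul (hd hf hr) (hd hg hr) u
  rw [dirDeriv_congr hU hfg u hq,
    dirDeriv_add (f := fun x => f x * dirDeriv u g x) (g := fun x => g x * dirDeriv u f x)
      ((hd hf hq).mul (hd (hg.dirDeriv hU u) hq))
      ((hd hg hq).mul (hd (hf.dirDeriv hU u) hq)),
    dirDeriv_mul (hd hf hq) (hd (hg.dirDeriv hU u) hq),
    dirDeriv_mul (hd hg hq) (hd (hf.dirDeriv hU u) hq)]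
  ring

theorem dirDeriv_fderiv_apply_self (hf : ContDiffAt ℝ 2 f q) (u : E) :
    dirDeriv u (fun r => fderiv ℝ f r r) q = dirDeriv u f q + fderiv ℝ (dirDeriv u f) q q := by
  have h2 : DifferentiableAt ℝ (fderiv ℝ f) q :=
    (hf.fderiv_right (m := 1) le_rfl).differentiableAt one_ne_zero
  have hsymm := hf.isSymmSndFDerivAt (by simp)
  have e1 := fderiv_clm_apply (u := fun r => r) h2 differentiableAt_id
  have e2 := fderiv_clm_apply (u := fun _ => u) h2 (differentiableAt_const u)
  change fderiv ℝ (fun r => fderiv ℝ f r r) q u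
    = fderiv ℝ f q u + fderiv ℝ (fun r => fderiv ℝ f r u) q q
  simp [e1, e2, hsymm u q]

theorem dirDeriv_dirDeriv_add_const_mul (hU : IsOpen U) (hf : ContDiffOn ℝ ∞ f U)
    (hg : ContDiffOn ℝ ∞ g U) (hq : q ∈ U) (c : ℝ) (u : E) :
    dirDeriv u (dirDeriv u (fun x => f x + c * g x)) q
      = dirDeriv u (dirDeriv u f) q + c * dirDeriv u (dirDeriv u g) q := by
  have hd {F : E → ℝ} (hF : ContDiffOn ℝ ∞ F U) {r : E} (hr : r ∈ U) :
      DifferentiableAt ℝ F r := (hF.differentiableOn (by simp)).differentiableAt (hU.mem_nhds hr)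
  have hfg : Set.EqOn (dirDeriv u (fun x => f x + c * g x))
      (fun x => dirDeriv u f x + c * dirDeriv u g x) U := fun r hr => by
    rw [dirDeriv_add (g := fun x => c * g x) (hd hf hr) ((hd hg hr).const_mul c),
      dirDeriv_const_mul (hd hg hr)]
  rw [dirDeriv_congr hU hfg u hq,
    dirDeriv_add (g := fun x => c * dirDeriv u g x) (hd (hf.dirDeriv hU u) hq)
      ((hd (hg.dirDeriv hU u) hq).const_mul c),
    dirDeriv_const_mul (hd (hg.dirDeriv hU u) hq)]

namespace IsEulerHomogeneousOn

variable {w w' : ℝ}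

theorem dirDeriv (hU : IsOpen U) (hf : ContDiffOn ℝ ∞ f U) (h : IsEulerHomogeneousOn U w f)
    (u : E) : IsEulerHomogeneousOn U (w - 1) (_root_.dirDeriv u f) := by
  intro q hq
  have hX : _root_.dirDeriv u (fun r => fderiv ℝ f r r) q = w * _root_.dirDeriv u f q := by
    rw [dirDeriv_congr hU h u hq,
      dirDeriv_const_mul ((hf.differentiableOn (by simp)).differentiableAt (hU.mem_nhds hq))]
  have := dirDeriv_fderiv_apply_self ((hf.contDiffAt (hU.mem_nhds hq)).of_le (by norm_cast)) u
  linarith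

theorem sub (hU : IsOpen U) (hf : DifferentiableOn ℝ f U) (hg : DifferentiableOn ℝ g U)
    (h₁ : IsEulerHomogeneousOn U w f) (h₂ : IsEulerHomogeneousOn U w g) :
    IsEulerHomogeneousOn U w (fun x => f x - g x) := fun q hq => by
  rw [fderiv_fun_sub (hf.differentiableAt (hU.mem_nhds hq)) (hg.differentiableAt (hU.mem_nhds hq))]
  simp [h₁ q hq, h₂ q hq, mul_sub]

theorem sum {ι : Type*} {s : Finset ι} {F : ι → E → ℝ} (hU : IsOpen U)
    (hF : ∀ i ∈ s, DifferentiableOn ℝ (F i) U) (h : ∀ i ∈ s, IsEulerHomogeneousOn U w (F i)) :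
    IsEulerHomogeneousOn U w (fun x => ∑ i ∈ s, F i x) := fun q hq => by
  rw [fderiv_fun_sum fun i hi => (hF i hi).differentiableAt (hU.mem_nhds hq)]
  simp [Finset.mul_sum, Finset.sum_congr rfl fun i hi => h i hi q hq]

theorem mul (hU : IsOpen U) (hf : DifferentiableOn ℝ f U) (hg : DifferentiableOn ℝ g U)
    (h₁ : IsEulerHomogeneousOn U w f) (h₂ : IsEulerHomogeneousOn U w' g) :
    IsEulerHomogeneousOn U (w + w') (fun x => f x * g x) := fun q hq => by
  rw [fderiv_fun_mul (hf.differentiableAt (hU.mem_nhds hq)) (hg.differentiableAt (hU.mem_nhds hq))]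
  simp only [add_apply, smul_apply, smul_eq_mul, h₁ q hq, h₂ q hq]
  ring

end IsEulerHomogeneousOn

end DirDeriv

section Ambient

variable {n : ℕ} {f g : Amb n → ℝ} {w : ℝ}

theorem isOpen_HS : IsOpen (HS n) := isOpen_lt continuous_const continuous_fst

theorem EulerA_eq_fderiv (f : Amb n → ℝ) (p : Amb n) : EulerA f p = fderiv ℝ f p p := by
  have hp : p = p.1 • ((1, 0) : Amb n) + ∑ i, p.2 i • ((0, Pi.single i 1) : Amb n) := by
    ext <;> simp [Prod.fst_sum, Prod.snd_sum, Pi.single_apply]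
  have := congrArg (fderiv ℝ f p) hp
  simp only [map_add, map_sum, map_smul, smul_eq_mul] at this
  rw [this]
  rfl

theorem isEulerHomogeneousOn_of_EulerA (h : ∀ p ∈ HS n, EulerA f p = w * f p) :
    IsEulerHomogeneousOn (HS n) w f := fun p hp => (EulerA_eq_fderiv f p).symm.trans (h p hp)

theorem lapA_eq_dirDeriv (f : Amb n → ℝ) :
    LapA f = fun p => dirDeriv (1, 0) (dirDeriv (1, 0) f) p
      - ∑ i, dirDeriv (0, Pi.single i 1) (dirDeriv (0, Pi.single i 1) f) p := rfl

theorem ContDiffOn.lapA (hf : ContDiffOn ℝ ∞ f (HS n)) : ContDiffOn ℝ ∞ (LapA f) (HS n) := by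
  rw [lapA_eq_dirDeriv]
  exact ((hf.dirDeriv isOpen_HS _).dirDeriv isOpen_HS _).sub
    (ContDiffOn.sum fun i _ => (hf.dirDeriv isOpen_HS _).dirDeriv isOpen_HS _)

theorem ContDiffOn.lapA_iterate (hf : ContDiffOn ℝ ∞ f (HS n)) (m : ℕ) :
    ContDiffOn ℝ ∞ (LapA^[m] f) (HS n) := by
  induction m with
  | zero => exact hf
  | succ m ih => rw [Function.iterate_succ_apply']; exact ih.lapA

theorem lapA_congr (hfg : Set.EqOn f g (HS n)) : Set.EqOn (LapA f) (LapA g) (HS n) :=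
  fun q hq => by
    have h2 (u : Amb n) := dirDeriv_congr isOpen_HS (dirDeriv_congr isOpen_HS hfg u) u hq
    simp only [lapA_eq_dirDeriv, h2]

theorem lapA_iterate_congr (hfg : Set.EqOn f g (HS n)) (m : ℕ) :
    Set.EqOn (LapA^[m] f) (LapA^[m] g) (HS n) := by
  induction m with
  | zero => exact hfg
  | succ m ih => simpa only [Function.iterate_succ_apply'] using lapA_congr ih

theorem lapA_add_const_mul (hf : ContDiffOn ℝ ∞ f (HS n)) (hg : ContDiffOn ℝ ∞ g (HS n))
    (c : ℝ) :
    Set.EqOn (LapA fun x => f x + c * g x) (fun x => LapA f x + c * LapA g x) (HS n) :=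
  fun q hq => by
    simp only [lapA_eq_dirDeriv, dirDeriv_dirDeriv_add_const_mul isOpen_HS hf hg hq,
      Finset.sum_add_distrib, ← Finset.mul_sum]
    ring

theorem lapA_iterate_add_const_mul (hf : ContDiffOn ℝ ∞ f (HS n))
    (hg : ContDiffOn ℝ ∞ g (HS n)) (c : ℝ) (m : ℕ) :
    Set.EqOn (LapA^[m] fun x => f x + c * g x)
      (fun x => LapA^[m] f x + c * LapA^[m] g x) (HS n) := by
  induction m with
  | zero => exact fun _ _ => rfl
  | succ m ih =>
    intro q hq
    simp only [Function.iterate_succ_apply']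
    rw [lapA_congr ih hq, lapA_add_const_mul (hf.lapA_iterate m) (hg.lapA_iterate m) c hq]

theorem IsEulerHomogeneousOn.lapA (hf : ContDiffOn ℝ ∞ f (HS n))
    (h : IsEulerHomogeneousOn (HS n) w f) : IsEulerHomogeneousOn (HS n) (w - 2) (LapA f) := by
  have h2 (u : Amb n) := (h.dirDeriv isOpen_HS hf u).dirDeriv isOpen_HS (hf.dirDeriv isOpen_HS u) u
  have hd (u : Amb n) := ((hf.dirDeriv isOpen_HS u).dirDeriv isOpen_HS u).differentiableOn
    (by simp)
  rw [lapA_eq_dirDeriv, show w - 2 = w - 1 - 1 by ring]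
  exact (h2 _).sub isOpen_HS (hd _) (DifferentiableOn.fun_sum fun i _ => hd _)
    (.sum isOpen_HS (fun i _ => hd _) fun i _ => h2 _)

theorem IsEulerHomogeneousOn.lapA_iterate (hf : ContDiffOn ℝ ∞ f (HS n))
    (h : IsEulerHomogeneousOn (HS n) w f) (m : ℕ) :
    IsEulerHomogeneousOn (HS n) (w - 2 * m) (LapA^[m] f) := by
  induction m with
  | zero => simpa using h
  | succ m ih =>
    rw [Function.iterate_succ_apply']
    convert ih.lapA (hf.lapA_iterate m) using 1
    push_cast
    ring

theorem contDiff_QA : ContDiff ℝ ∞ (QA (n := n)) := by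
  unfold QA
  fun_prop

theorem fderiv_coord_apply (i : Fin (n + 1)) (q u : Amb n) :
    fderiv ℝ (fun p : Amb n => p.2 i) q u = u.2 i := by
  rw [fderiv_apply (𝕜 := ℝ) (Φ := Prod.snd) differentiableAt_snd i, fderiv_snd]
  rfl

theorem dirDeriv_QA (u q : Amb n) :
    dirDeriv u QA q = 2 * ∑ i, q.2 i * u.2 i - 2 * q.1 * u.1 := by
  have hc (i : Fin (n + 1)) : DifferentiableAt ℝ (fun p : Amb n => p.2 i) q := by fun_prop
  unfold dirDeriv QA
  rw [fderiv_fun_sub (by fun_prop) (by fun_prop), fderiv_fun_sum (fun i _ => by fun_prop),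
    fderiv_fun_pow 2 differentiableAt_fst]
  simp [fderiv_fun_pow, hc, fderiv_coord_apply, fderiv_fst, Finset.mul_sum, mul_assoc]

theorem dirDeriv_dirDeriv_QA (u q : Amb n) : dirDeriv u (dirDeriv u QA) q = 2 * QA u := by
  have hc (i : Fin (n + 1)) : DifferentiableAt ℝ (fun p : Amb n => p.2 i) q := by fun_prop
  rw [show dirDeriv u QA = _ from funext (dirDeriv_QA u)]
  unfold dirDeriv QA
  rw [fderiv_fun_sub (by fun_prop) (by fun_prop), fderiv_const_mul (by fun_prop),
    fderiv_fun_sum (fun i _ => by fun_prop), fderiv_mul_const (by fun_prop),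
    fderiv_const_mul (by fun_prop), fderiv_fst]
  simp only [hc, fderiv_mul_const, sub_apply, smul_apply, sum_apply, fderiv_coord_apply,
    smul_eq_mul, ContinuousLinearMap.coe_fst', sq]
  ring

theorem lapA_QA_mul (hf : ContDiffOn ℝ ∞ f (HS n)) {q : Amb n} (hq : q ∈ HS n) :
    LapA (fun x => QA x * f x) q
      = QA q * LapA f q - 4 * EulerA f q - 2 * (n + 2) * f q := by
  have hX : EulerA f q
      = q.1 * dirDeriv (1, 0) f q + ∑ i, q.2 i * dirDeriv (0, Pi.single i 1) f q := rfl
  simp only [hX, lapA_eq_dirDeriv, dirDeriv_dirDeriv_mul isOpen_HS contDiff_QA.contDiffOn hf hq,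
    dirDeriv_QA, dirDeriv_dirDeriv_QA]
  have hQt : QA ((1, 0) : Amb n) = -1 := by simp [QA]
  have hQx (i : Fin (n + 1)) : QA ((0, Pi.single i 1) : Amb n) = 1 := by
    simp [QA, Pi.single_apply]
  simp only [Pi.zero_apply, mul_zero, Finset.sum_const_zero, mul_one, zero_sub, mul_neg, neg_mul,
    hQt, hQx, Pi.single_apply, mul_ite, Finset.sum_ite_eq', Finset.mem_univ, ↓reduceIte, sub_zero,
    Finset.sum_add_distrib, Finset.sum_const, Finset.card_univ, Fintype.card_fin, nsmul_eq_mul,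
    Nat.cast_add, Nat.cast_one, mul_add, mul_sub, Finset.mul_sum]
  ring_nf

noncomputable def lapQCoeff (n m : ℕ) (w : ℝ) : ℝ := -2 * m * (2 * w + n + 4 - 2 * m)

theorem lapA_iterate_QA_mul (hf : ContDiffOn ℝ ∞ f (HS n))
    (h : IsEulerHomogeneousOn (HS n) w f) (m : ℕ) :
    Set.EqOn (LapA^[m] fun x => QA x * f x)
      (fun x => QA x * LapA^[m] f x + lapQCoeff n m w * LapA^[m - 1] f x) (HS n) := by
  induction m with
  | zero => intro q _; simp [lapQCoeff]
  | succ m ih =>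
    intro q hq
    have hQf := contDiff_QA.contDiffOn.mul (hf.lapA_iterate m)
    rw [Function.iterate_succ_apply', lapA_congr ih hq,
      lapA_add_const_mul hQf (hf.lapA_iterate (m - 1)) _ hq]
    dsimp only
    rw [lapA_QA_mul (hf.lapA_iterate m) hq,
      EulerA_eq_fderiv, h.lapA_iterate hf m q hq, ← Function.iterate_succ_apply' LapA m,
      Nat.add_sub_cancel]
    rcases m with _ | m
    · simp only [zero_add, Function.iterate_one, Function.iterate_zero, id_eq, lapQCoeff,
        CharP.cast_eq_zero, Nat.cast_one]
      ring
    · rw [Nat.add_sub_cancel, ← Function.iterate_succ_apply' LapA m]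
      simp only [lapQCoeff]
      push_cast
      ring

theorem lapA_iterate_mul_QA_mul_of_QA_eq_zero {h v : Amb n → ℝ} {wh wv : ℝ}
    (hh : ContDiffOn ℝ ∞ h (HS n)) (hv : ContDiffOn ℝ ∞ v (HS n))
    (hhw : IsEulerHomogeneousOn (HS n) wh h) (hvw : IsEulerHomogeneousOn (HS n) wv v)
    (a b c : ℕ) {p : Amb n} (hp : p ∈ HS n) (hpQ : QA p = 0) :
    LapA^[a] (fun q => LapA^[b] (fun x => QA x * h x) q * LapA^[c] v q) p
      = lapQCoeff n a (wh - 2 * b + (wv - 2 * c))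
          * LapA^[a - 1] (fun q => LapA^[b] h q * LapA^[c] v q) p
        + lapQCoeff n b wh * LapA^[a] (fun q => LapA^[b - 1] h q * LapA^[c] v q) p := by
  have hF := (hh.lapA_iterate b).mul (hv.lapA_iterate c)
  have hG := (hh.lapA_iterate (b - 1)).mul (hv.lapA_iterate c)
  have hFw := (hhw.lapA_iterate hh b).mul isOpen_HS ((hh.lapA_iterate b).differentiableOn (by simp))
    ((hv.lapA_iterate c).differentiableOn (by simp)) (hvw.lapA_iterate hv c)
  have hsplit : Set.EqOn (fun q => LapA^[b] (fun x => QA x * h x) q * LapA^[c] v q)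
      (fun q => QA q * (LapA^[b] h q * LapA^[c] v q)
        + lapQCoeff n b wh * (LapA^[b - 1] h q * LapA^[c] v q)) (HS n) := fun q hq => by
    simp only [lapA_iterate_QA_mul hh hhw b hq]
    ring
  rw [lapA_iterate_congr hsplit a hp,
    lapA_iterate_add_const_mul (contDiff_QA.contDiffOn.mul hF) hG _ a hp]
  dsimp only
  rw [lapA_iterate_QA_mul hF hFw a hp]
  dsimp only
  rw [hpQ, zero_mul, zero_add]

end Ambient

section TripleSum

open Finset

variable {M : Type*} {k : ℕ}

def sumTriple [AddCommMonoid M] (k : ℕ) (F : ℕ → ℕ → ℕ → M) : M :=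
  ∑ x ∈ antidiagonal k, ∑ y ∈ antidiagonal x.2, F x.1 y.1 y.2

theorem sumTriple_congr [AddCommMonoid M] {F G : ℕ → ℕ → ℕ → M}
    (h : ∀ a b c, a + b + c = k → F a b c = G a b c) : sumTriple k F = sumTriple k G :=
  sum_congr rfl fun x hx => sum_congr rfl fun y hy => h _ _ _ <| by
    rw [HasAntidiagonal.mem_antidiagonal] at hx hy
    omega

theorem sumTriple_sub [AddCommGroup M] (F G : ℕ → ℕ → ℕ → M) :
    sumTriple k (fun a b c => F a b c - G a b c) = sumTriple k F - sumTriple k G := by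
  simp only [sumTriple, sum_sub_distrib]

theorem sumTriple_succ_of_fst_eq_zero [AddCommMonoid M] {F : ℕ → ℕ → ℕ → M}
    (hF : ∀ b c, F 0 b c = 0) : sumTriple (k + 1) F = sumTriple k fun a b c => F (a + 1) b c := by
  simp [sumTriple, Nat.sum_antidiagonal_succ, hF]

theorem sumTriple_succ_of_snd_eq_zero [AddCommMonoid M] {F : ℕ → ℕ → ℕ → M}
    (hF : ∀ a c, F a 0 c = 0) : sumTriple (k + 1) F = sumTriple k fun a b c => F a (b + 1) c := by
  unfold sumTriple
  rw [Nat.sum_antidiagonal_succ']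
  simp [Nat.sum_antidiagonal_succ, hF]

theorem sumTriple_eq_of_succ_fst_eq_succ_snd [AddCommMonoid M] {F G : ℕ → ℕ → ℕ → M}
    (hF : ∀ b c, F 0 b c = 0) (hG : ∀ a c, G a 0 c = 0)
    (hFG : ∀ a b c, F (a + 1) b c = G a (b + 1) c) (k : ℕ) : sumTriple k F = sumTriple k G := by
  cases k with
  | zero => simp [sumTriple, hF, hG]
  | succ k =>
    rw [sumTriple_succ_of_fst_eq_zero hF, sumTriple_succ_of_snd_eq_zero hG]
    simp only [hFG]

end TripleSum

theorem ORop_eq_sumTriple {n : ℕ} (k : ℕ) (u v : Amb n → ℝ) (p : Amb n) :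
    ORop k u v p = sumTriple k fun a b c =>
      ORA n k a b c * LapA^[a] (fun q => LapA^[b] u q * LapA^[c] v q) p := rfl

theorem succ_mul_ORA_succ_fst {n k : ℕ} (hnk : 2 * k < n) (a b c : ℕ) :
    ((a : ℝ) + 1) * (((n : ℝ) - 2 * k) / 6 + b + c) * ORA n k (a + 1) b c
      = ((b : ℝ) + 1) * (((n : ℝ) - 2 * k) / 6 + a + c) * ORA n k a (b + 1) c := by
  have hα : 0 < ((n : ℝ) - 2 * k) / 6 := by
    have : (2 * k : ℝ) < n := by exact_mod_cast hnk
    linarith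
  unfold ORA
  set α : ℝ := ((n : ℝ) - 2 * k) / 6
  have hΓ (x : ℝ) (hx : 0 < x) : Real.Gamma (x + 1) = x * Real.Gamma x :=
    Real.Gamma_add_one hx.ne'
  simp only [Nat.factorial_succ, Nat.cast_mul, Nat.cast_succ]
  rw [show α + (a + 1) + b = α + a + (b + 1) by ring, show α + (a + 1) + c = α + a + c + 1 by ring,
    show α + (b + 1) + c = α + b + c + 1 by ring, hΓ _ (by positivity), hΓ _ (by positivity)]
  have := Real.Gamma_pos_of_pos hα
  have := Real.Gamma_pos_of_pos (show 0 < α + k by positivity)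
  field_simp

theorem stmt_11_general (n k : ℕ) (hnk : 2*k < n)
    (h v : Amb n → ℝ)
    (hh : ContDiffOn ℝ (⊤ : ℕ∞) h (HS n)) (hv : ContDiffOn ℝ (⊤ : ℕ∞) v (HS n))
    (hhhom : ∀ p ∈ HS n, EulerA h p = (-((n:ℝ) - 2*k)/3 - 2) * h p)
    (hvhom : ∀ p ∈ HS n, EulerA v p = (-((n:ℝ) - 2*k)/3) * v p)
    (p : Amb n) (hp : p ∈ HS n) (hpQ : QA p = 0) :
    ORop k (fun q => QA q * h q) v p = 0 := by
  have hhw := isEulerHomogeneousOn_of_EulerA hhhom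
  have hvw := isEulerHomogeneousOn_of_EulerA hvhom
  set α : ℝ := ((n : ℝ) - 2 * k) / 6
  set T : ℕ → ℕ → ℕ → ℝ := fun a b c => LapA^[a] (fun q => LapA^[b] h q * LapA^[c] v q) p
  set F : ℕ → ℕ → ℕ → ℝ := fun a b c => 4 * a * (α + b + c) * ORA n k a b c * T (a - 1) b c
  set G : ℕ → ℕ → ℕ → ℝ := fun a b c => 4 * b * (α + a + c) * ORA n k a b c * T a (b - 1) c
  calc ORop k (fun q => QA q * h q) v p = sumTriple k (fun a b c => F a b c - G a b c) :=
        (ORop_eq_sumTriple _ _ _ p).trans <| sumTriple_congr fun a b c habc => by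
          have habc' : (a : ℝ) + b + c = k := by exact_mod_cast habc
          rw [lapA_iterate_mul_QA_mul_of_QA_eq_zero hh hv hhw hvw a b c hp hpQ]
          simp only [F, G, T, α, lapQCoeff]
          linear_combination 4 * ORA n k a b c * (a * T (a - 1) b c + b * T a (b - 1) c) * habc'
    _ = sumTriple k F - sumTriple k G := sumTriple_sub F G
    _ = 0 := sub_eq_zero.mpr <| sumTriple_eq_of_succ_fst_eq_succ_snd (by simp [F]) (by simp [G])
        (fun a b c => by
          simp only [F, G, Nat.cast_succ, Nat.add_sub_cancel]
          linear_combination (4 * T a b c) * succ_mul_ORA_succ_fst hnk a b c) k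

/-- Example 3.4, tangentiality of the Ovsienko–Redou operator: for
`n > 2k ≥ 2` and `h, v` smooth on `{t > 0}` with `Xh = (−(n−2k)/3 − 2)·h` and
`Xv = (−(n−2k)/3)·v` there, the function `Σ_{a+b+c=k} A_{a,b,c}·Δ̃^a((Δ̃^b(Q·h))(Δ̃^c v))`
vanishes on the null cone `{Q = 0} ∩ {t > 0}`. -/
theorem stmt_11 (n k : ℕ) (hk : 1 ≤ k) (hnk : 2*k < n)
    (h v : Amb n → ℝ)
    (hh : ContDiffOn ℝ (⊤ : ℕ∞) h (HS n)) (hv : ContDiffOn ℝ (⊤ : ℕ∞) v (HS n))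
    (hhhom : ∀ p ∈ HS n, EulerA h p = (-((n:ℝ) - 2*k)/3 - 2) * h p)
    (hvhom : ∀ p ∈ HS n, EulerA v p = (-((n:ℝ) - 2*k)/3) * v p)
    (p : Amb n) (hp : p ∈ HS n) (hpQ : QA p = 0) :
    ORop k (fun q => QA q * h q) v p = 0 :=
  stmt_11_general n k hnk h v hh hv hhhom hvhom p hp hpQ
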